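/- arXiv:2107.12035 — 3 statements merged into one kernel-verified Lean document; each statement's English description precedes it below -/
import Mathlib

section
/- (Generalized Newton–MacLaurin inequality, Proposition 2.3.) Let n ≥ 2 and let k, l, r, s be integers with n ≥ k > l ≥ 0, r > s ≥ 0, k ≥ r and l ≥ s. Then for every λ ∈ Γ_k one has [ (σ_k(λ)/C(n,k)) / (σ_l(λ)/C(n,l)) ]^{1/(k−l)} ≤ [ (σ_r(λ)/C(n,r)) / (σ_s(λ)/C(n,s)) ]^{1/(r−s)}, where C(n,m) = n!/(m!(n−m)!) is the binomial coefficient. -/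
/-!
Write `p j = σ_j(λ) / C(n, j)`. Newton's inequalities `p j * p (j + 2) ≤ p (j + 1) ^ 2` hold for
every `λ ∈ ℝⁿ`. Indeed, `p j` is the `(n - j)`-th coefficient of `∏ i, (X + λ i)` divided by a
binomial coefficient; differentiation shifts these normalized coefficients down by one index and,
by Rolle's theorem, keeps all roots real, so the inequalities reduce to the three lowest
coefficients of a real-rooted polynomial. There they are Cauchy–Schwarz for the products `A i` of
all roots but the `i`-th: `e_{m-1} = ∑ A i` and `e_m e_{m-2} = ∑_{i<j} A i A j`.

On `Γ_k` the numbers `p 0, …, p k` are positive, so Newton's inequalities say that `log p` is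
concave on `{0, …, k}`. The logarithm of either side of the claim is a slope of `log p`, i.e. an
average of its antitone increments over `[l, k)` resp. `[s, r)`, and such averages decrease as the
window moves to the right.
-/

/-- The `k`-th elementary symmetric function of a vector `lam ∈ ℝⁿ`. -/
noncomputable def esymm (n k : ℕ) (lam : Fin n → ℝ) : ℝ :=
  ∑ s ∈ Finset.powersetCard k (Finset.univ : Finset (Fin n)), ∏ i ∈ s, lam i

/-- The Gårding cone `Γ_k = {λ ∈ ℝⁿ : σ_j(λ) > 0 for all 1 ≤ j ≤ k}`. -/
def GammaCone (n k : ℕ) : Set (Fin n → ℝ) :=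
  {lam | ∀ j : ℕ, 1 ≤ j → j ≤ k → 0 < esymm n j lam}

open Finset Polynomial

section ElementarySymmetric

theorem Multiset.esymm_cons_succ {R : Type*} [CommSemiring R] (a : R) (s : Multiset R) (k : ℕ) :
    (a ::ₘ s).esymm (k + 1) = s.esymm (k + 1) + a * s.esymm k := by
  simp [Multiset.esymm, Multiset.powersetCard_cons, Multiset.sum_map_mul_left]

theorem Multiset.esymm_one {R : Type*} [CommSemiring R] (s : Multiset R) :
    s.esymm 1 = s.sum := by
  simp [Multiset.esymm, Multiset.powersetCard_one]

theorem Multiset.sq_sum_eq {R : Type*} [CommRing R] (s : Multiset R) :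
    s.sum ^ 2 = (s.map (· ^ 2)).sum + 2 * s.esymm 2 := by
  induction s using Multiset.induction with
  | empty => simp [Multiset.esymm, Multiset.powersetCard_zero_right]
  | cons a s ih =>
    rw [Multiset.esymm_cons_succ, Multiset.esymm_one, Multiset.sum_cons, Multiset.map_cons,
      Multiset.sum_cons]
    linear_combination ih

variable {ι : Type*} [Fintype ι] [DecidableEq ι]

theorem Finset.sum_powersetCard_prod_compl {R : Type*} [CommSemiring R] (f : ι → R) {j k : ℕ}
    (h : j + k = Fintype.card ι) :
    ∑ u ∈ powersetCard j univ, ∏ i ∈ uᶜ, f i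
      = ∑ u ∈ powersetCard k univ, ∏ i ∈ u, f i := by
  refine sum_nbij' compl compl (fun u hu => ?_) (fun u hu => ?_) (fun u _ => compl_compl u)
    (fun u _ => compl_compl u) (fun u _ => rfl)
  all_goals
    rw [mem_powersetCard_univ] at hu ⊢
    rw [card_compl, hu]
    omega

theorem Finset.prod_compl_singleton_mul_prod_compl_singleton {M : Type*} [CommMonoid M]
    (f : ι → M) {x y : ι} (hxy : x ≠ y) :
    (∏ i ∈ {x}ᶜ, f i) * ∏ i ∈ {y}ᶜ, f i = (∏ i, f i) * ∏ i ∈ {x, y}ᶜ, f i := by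
  have prod_compl_singleton {a b : ι} (hab : a ≠ b) :
      ∏ i ∈ {b}ᶜ, f i = f a * ∏ i ∈ {a, b}ᶜ, f i := by
    rw [compl_insert, mul_prod_erase _ _ (by simpa using hab)]
  rw [prod_compl_singleton hxy.symm, prod_compl_singleton hxy, pair_comm y x,
    ← prod_mul_prod_compl {x, y}, prod_pair hxy]
  ac_rfl

theorem Fintype.newton_inequality_top (f : ι → ℝ) {c : ℕ} (hc : Fintype.card ι = c + 2) :
    2 * (c + 2) * ((univ.val.map f).esymm (c + 2) * (univ.val.map f).esymm c)
      ≤ (c + 1) * (univ.val.map f).esymm (c + 1) ^ 2 := by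
  simp only [esymm_map_val]
  set A : ι → ℝ := fun i => ∏ j ∈ {i}ᶜ, f j
  have hA_sum : ∑ u ∈ powersetCard (c + 1) univ, ∏ i ∈ u, f i = ∑ i, A i := by
    rw [← sum_powersetCard_prod_compl f (j := 1) (by omega), powersetCard_one, sum_map]
    rfl
  have hA_pairs : (∑ u ∈ powersetCard (c + 2) univ, ∏ i ∈ u, f i)
      * ∑ u ∈ powersetCard c univ, ∏ i ∈ u, f i
      = ∑ u ∈ powersetCard 2 univ, ∏ i ∈ u, A i := by
    rw [← sum_powersetCard_prod_compl f (j := 2) (k := c) (by omega), ← hc, ← card_univ,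
      powersetCard_self, sum_singleton, mul_sum]
    refine Finset.sum_congr rfl fun u hu => ?_
    obtain ⟨x, y, hxy, rfl⟩ := card_eq_two.mp (mem_powersetCard_univ.mp hu)
    rw [prod_pair hxy, prod_compl_singleton_mul_prod_compl_singleton f hxy]
  have hsq := Multiset.sq_sum_eq (univ.val.map A)
  rw [Multiset.map_map, esymm_map_val] at hsq
  change (∑ i, A i) ^ 2 = ∑ i, A i ^ 2 + 2 * _ at hsq
  have hcs := sq_sum_le_card_mul_sum_sq (s := univ) (f := A)
  rw [card_univ, hc] at hcs
  rw [hA_sum, hA_pairs]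
  push_cast at hcs ⊢
  linear_combination hcs - (c + 2) * hsq

theorem Multiset.newton_inequality_top (s : Multiset ℝ) {c : ℕ} (hc : Multiset.card s = c + 2) :
    2 * (c + 2) * (s.esymm (c + 2) * s.esymm c) ≤ (c + 1) * s.esymm (c + 1) ^ 2 := by
  classical
  simpa only [Multiset.map_univ_coe] using
    Fintype.newton_inequality_top (fun x : s => (x : ℝ)) (by rwa [Multiset.card_coe])

end ElementarySymmetric

namespace Polynomial

theorem Splits.derivative {P : ℝ[X]} (hP : P.Splits) : P.derivative.Splits := by
  rw [splits_iff_card_roots] at hP ⊢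
  have := card_roots_le_derivative P
  have := card_roots' P.derivative
  rw [natDegree_derivative] at *
  omega

/-- The coefficients `a i` in `P = ∑ i, (m choose i) * a i * X ^ i`, where `m = P.natDegree`. -/
noncomputable def normalizedCoeff (P : ℝ[X]) (i : ℕ) : ℝ :=
  P.coeff i / P.natDegree.choose i

theorem normalizedCoeff_derivative (P : ℝ[X]) (i : ℕ) :
    P.derivative.normalizedCoeff i = P.natDegree * P.normalizedCoeff (i + 1) := by
  obtain h | ⟨m, hm⟩ : P.natDegree = 0 ∨ ∃ m, P.natDegree = m + 1 :=
    (Nat.eq_zero_or_eq_succ_pred _).imp_right fun h => ⟨_, h⟩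
  · simp [normalizedCoeff, derivative_of_natDegree_zero h, h]
  have hchoose : ((m + 1).choose (i + 1) : ℝ) = (m + 1) * m.choose i / (i + 1) := by
    rw [eq_div_iff (by positivity)]
    exact_mod_cast (Nat.add_one_mul_choose_eq m i).symm
  rw [normalizedCoeff, normalizedCoeff, natDegree_derivative, hm, coeff_derivative, hchoose,
    Nat.add_sub_cancel, div_div_eq_mul_div]
  push_cast
  rw [← mul_div_assoc, mul_div_mul_left _ _ (by positivity)]

theorem Splits.normalizedCoeff_zero_mul_two_le_sq {P : ℝ[X]} (hP : P.Splits) :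
    P.normalizedCoeff 0 * P.normalizedCoeff 2 ≤ P.normalizedCoeff 1 ^ 2 := by
  obtain hlt | ⟨c, hc⟩ : P.natDegree < 2 ∨ ∃ c, P.natDegree = c + 2 :=
    (lt_or_ge _ 2).imp_right fun h => ⟨_, (Nat.sub_add_cancel h).symm⟩
  · simp only [normalizedCoeff, Nat.choose_eq_zero_of_lt hlt, Nat.cast_zero, div_zero, mul_zero]
    positivity
  set z := P.roots.map Neg.neg
  have hz : Multiset.card z = c + 2 := by
    rw [Multiset.card_map, splits_iff_card_roots.mp hP, hc]
  have hcoeff {k j : ℕ} (hkj : k + j = c + 2) : P.coeff k = P.leadingCoeff * z.esymm j := by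
    conv_lhs => rw [hP.eq_prod_roots]
    rw [coeff_C_mul, show j = Multiset.card z - k by omega,
      ← Multiset.prod_X_add_C_coeff z (by omega)]
    simp [z, Multiset.map_map, sub_eq_add_neg]
  have hchoose : ((c + 2).choose 2 : ℝ) = (c + 2) * (c + 1) / 2 := by
    rw [Nat.cast_choose_two]; push_cast; ring
  have hnewton := mul_le_mul_of_nonneg_left (z.newton_inequality_top hz)
    (sq_nonneg P.leadingCoeff)
  simp only [normalizedCoeff, hc, hcoeff (zero_add _), hcoeff (by omega : 1 + (c + 1) = c + 2),
    hcoeff (by omega : 2 + c = c + 2), hchoose, Nat.choose_zero_right, Nat.choose_one_right]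
  calc _ = P.leadingCoeff ^ 2 * (2 * (c + 2) * (z.esymm (c + 2) * z.esymm c))
        / ((c + 2) ^ 2 * (c + 1)) := by field_simp; ring
    _ ≤ P.leadingCoeff ^ 2 * ((c + 1) * z.esymm (c + 1) ^ 2) / ((c + 2) ^ 2 * (c + 1)) := by
        gcongr
    _ = _ := by field_simp; push_cast; ring

theorem Splits.normalizedCoeff_mul_le_sq {P : ℝ[X]} (hP : P.Splits) (i : ℕ) :
    P.normalizedCoeff i * P.normalizedCoeff (i + 2) ≤ P.normalizedCoeff (i + 1) ^ 2 := by
  induction i generalizing P with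
  | zero => exact hP.normalizedCoeff_zero_mul_two_le_sq
  | succ i ih =>
    have h := ih hP.derivative
    simp only [normalizedCoeff_derivative] at h
    rcases P.natDegree.eq_zero_or_pos with h0 | h0
    · simp [normalizedCoeff, h0]
    · refine le_of_mul_le_mul_left ?_ (by positivity : (0 : ℝ) < P.natDegree ^ 2)
      linear_combination h

end Polynomial

theorem esymm_zero (n : ℕ) (lam : Fin n → ℝ) : esymm n 0 lam = 1 := by
  simp [esymm]

theorem esymm_pos_of_mem_gammaCone {n k j : ℕ} {lam : Fin n → ℝ}
    (hlam : lam ∈ GammaCone n k) (hj : j ≤ k) : 0 < esymm n j lam := by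
  rcases j.eq_zero_or_pos with rfl | hj0
  · simp [esymm_zero]
  · exact hlam j hj0 hj

theorem normalizedCoeff_prod_X_add_C {n j : ℕ} (lam : Fin n → ℝ) (hj : j ≤ n) :
    (∏ i, (X + C (lam i))).normalizedCoeff (n - j) = esymm n j lam / n.choose j := by
  have hdeg : (∏ i, (X + C (lam i))).natDegree = n := by
    rw [natDegree_prod_of_monic _ _ fun i _ => monic_X_add_C (lam i)]
    simp
  rw [normalizedCoeff, hdeg, prod_X_add_C_coeff _ _ (by simp), Nat.choose_symm hj, card_univ,
    Fintype.card_fin, Nat.sub_sub_self hj, esymm]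

theorem esymm_div_choose_mul_le_sq {n b : ℕ} (lam : Fin n → ℝ) (hb : b + 2 ≤ n) :
    esymm n b lam / n.choose b * (esymm n (b + 2) lam / n.choose (b + 2))
      ≤ (esymm n (b + 1) lam / n.choose (b + 1)) ^ 2 := by
  have h := (Splits.prod (s := univ) fun i _ => Splits.X_add_C (lam i)).normalizedCoeff_mul_le_sq
    (n - (b + 2))
  rwa [show n - (b + 2) + 1 = n - (b + 1) by omega, show n - (b + 2) + 2 = n - b by omega,
    normalizedCoeff_prod_X_add_C lam hb, normalizedCoeff_prod_X_add_C lam (by omega),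
    normalizedCoeff_prod_X_add_C lam (by omega), mul_comm] at h

section Averages

variable {ι : Type*} {u : ι → ℝ} {s t : Finset ι}

theorem card_mul_sum_le_card_mul_sum (h : ∀ i ∈ s, ∀ j ∈ t, u j ≤ u i) :
    (#s : ℝ) * ∑ j ∈ t, u j ≤ #t * ∑ i ∈ s, u i :=
  calc (#s : ℝ) * ∑ j ∈ t, u j = ∑ _i ∈ s, ∑ j ∈ t, u j := by
        rw [sum_const, nsmul_eq_mul]
    _ ≤ ∑ i ∈ s, ∑ _j ∈ t, u i :=
        sum_le_sum fun i hi => sum_le_sum fun j hj => h i hi j hj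
    _ = #t * ∑ i ∈ s, u i := by rw [mul_sum]; simp only [sum_const, nsmul_eq_mul]

variable [DecidableEq ι]

theorem sum_div_card_le_sum_union_div_card (hst : Disjoint s t) (ht : t.Nonempty)
    (h : ∀ i ∈ s, ∀ j ∈ t, u j ≤ u i) :
    (∑ j ∈ t, u j) / #t ≤ (∑ j ∈ s ∪ t, u j) / #(s ∪ t) := by
  rw [sum_union hst, card_union_of_disjoint hst, Nat.cast_add,
    div_le_div_iff₀ (by simpa using ht) (by positivity)]
  linear_combination card_mul_sum_le_card_mul_sum h

theorem sum_union_div_card_le_sum_div_card (hst : Disjoint s t) (hs : s.Nonempty)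
    (h : ∀ i ∈ s, ∀ j ∈ t, u j ≤ u i) :
    (∑ j ∈ s ∪ t, u j) / #(s ∪ t) ≤ (∑ i ∈ s, u i) / #s := by
  rw [sum_union hst, card_union_of_disjoint hst, Nat.cast_add,
    div_le_div_iff₀ (by positivity) (by simpa using hs)]
  linear_combination card_mul_sum_le_card_mul_sum h

end Averages

theorem sum_Ico_div_le_sum_Ico_div_of_antitoneOn {u : ℕ → ℝ} {a b c d : ℕ}
    (hu : AntitoneOn u (Set.Ico a d)) (hab : a < b) (hac : a ≤ c) (hbd : b ≤ d) (hcd : c < d) :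
    (∑ j ∈ Ico c d, u j) / ((d : ℝ) - c) ≤ (∑ j ∈ Ico a b, u j) / ((b : ℝ) - a) := by
  have card_Ico_eq {x y : ℕ} (hxy : x ≤ y) : ((y : ℝ) - x) = #(Ico x y) := by
    rw [Nat.card_Ico, Nat.cast_sub hxy]
  have antitone_across {x y z : ℕ} (hx : a ≤ x) (hz : z ≤ d) :
      ∀ i ∈ Ico x y, ∀ j ∈ Ico y z, u j ≤ u i := by
    intro i hi j hj
    simp only [mem_Ico] at hi hj
    exact hu ⟨by omega, by omega⟩ ⟨by omega, by omega⟩ (by omega)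
  rw [card_Ico_eq hcd.le, card_Ico_eq hab.le]
  calc (∑ j ∈ Ico c d, u j) / #(Ico c d)
      ≤ (∑ j ∈ Ico a c ∪ Ico c d, u j) / #(Ico a c ∪ Ico c d) :=
        sum_div_card_le_sum_union_div_card (Ico_disjoint_Ico_consecutive a c d)
          (nonempty_Ico.mpr hcd) (antitone_across le_rfl le_rfl)
    _ = (∑ j ∈ Ico a b ∪ Ico b d, u j) / #(Ico a b ∪ Ico b d) := by
        rw [Ico_union_Ico_eq_Ico hac hcd.le, Ico_union_Ico_eq_Ico hab.le hbd]
    _ ≤ (∑ j ∈ Ico a b, u j) / #(Ico a b) :=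
        sum_union_div_card_le_sum_div_card (Ico_disjoint_Ico_consecutive a b d)
          (nonempty_Ico.mpr hab) (antitone_across le_rfl le_rfl)

theorem div_rpow_le_div_rpow_of_mul_le_sq {p : ℕ → ℝ} {k l r s : ℕ}
    (hp : ∀ j ≤ k, 0 < p j) (hnewton : ∀ j, j + 2 ≤ k → p j * p (j + 2) ≤ p (j + 1) ^ 2)
    (hlk : l < k) (hsr : s < r) (hrk : r ≤ k) (hsl : s ≤ l) :
    (p k / p l) ^ ((1 : ℝ) / ((k : ℝ) - l))
      ≤ (p r / p s) ^ ((1 : ℝ) / ((r : ℝ) - s)) := by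
  set q : ℕ → ℝ := fun j => Real.log (p j)
  have hconcave : AntitoneOn (fun j => q (j + 1) - q j) (Set.Ico s k) := by
    refine antitoneOn_of_add_one_le Set.ordConnected_Ico fun j _ _ hj1 => ?_
    have hj : j + 2 ≤ k := by have := (Set.mem_Ico.mp hj1).2; omega
    have := Real.log_le_log (mul_pos (hp j (by omega)) (hp (j + 2) hj)) (hnewton j hj)
    rw [Real.log_mul (hp j (by omega)).ne' (hp (j + 2) hj).ne', Real.log_pow] at this
    push_cast at this
    linarith
  have hslope := sum_Ico_div_le_sum_Ico_div_of_antitoneOn hconcave hsr hsl hrk hlk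
  rw [sum_Ico_sub q hlk.le, sum_Ico_sub q hsr.le] at hslope
  rw [Real.rpow_def_of_pos (div_pos (hp k le_rfl) (hp l (by omega))),
    Real.rpow_def_of_pos (div_pos (hp r hrk) (hp s (by omega))),
    Real.log_div (hp k le_rfl).ne' (hp l (by omega)).ne',
    Real.log_div (hp r hrk).ne' (hp s (by omega)).ne', mul_one_div, mul_one_div]
  exact Real.exp_le_exp.mpr hslope

theorem newton_maclaurin_general (n k l r s : ℕ) (hkn : k ≤ n) (hlk : l < k)
    (hsr : s < r) (hrk : r ≤ k) (hsl : s ≤ l)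
    (lam : Fin n → ℝ) (hlam : lam ∈ GammaCone n k) :
    ((esymm n k lam / (n.choose k : ℝ)) / (esymm n l lam / (n.choose l : ℝ)))
        ^ ((1 : ℝ) / ((k : ℝ) - (l : ℝ)))
      ≤ ((esymm n r lam / (n.choose r : ℝ)) / (esymm n s lam / (n.choose s : ℝ)))
        ^ ((1 : ℝ) / ((r : ℝ) - (s : ℝ))) :=
  div_rpow_le_div_rpow_of_mul_le_sq (p := fun j => esymm n j lam / n.choose j)
    (fun j hj => div_pos (esymm_pos_of_mem_gammaCone hlam hj)
      (by exact_mod_cast Nat.choose_pos (hj.trans hkn)))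
    (fun j hj => esymm_div_choose_mul_le_sq lam (hj.trans hkn)) hlk hsr hrk hsl

/-- Generalized Newton–MacLaurin inequality (Proposition 2.3). -/
theorem newton_maclaurin (n k l r s : ℕ) (hn : 2 ≤ n) (hkn : k ≤ n) (hlk : l < k)
    (hsr : s < r) (hrk : r ≤ k) (hsl : s ≤ l)
    (lam : Fin n → ℝ) (hlam : lam ∈ GammaCone n k) :
    ((esymm n k lam / (n.choose k : ℝ)) / (esymm n l lam / (n.choose l : ℝ)))
        ^ ((1 : ℝ) / ((k : ℝ) - (l : ℝ)))
      ≤ ((esymm n r lam / (n.choose r : ℝ)) / (esymm n s lam / (n.choose s : ℝ)))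
        ^ ((1 : ℝ) / ((r : ℝ) - (s : ℝ))) :=
  newton_maclaurin_general n k l r s hkn hlk hsr hrk hsl lam hlam
end

section
/- (Proposition 2.4, first part.) Let n ≥ 2 and 0 ≤ l < k ≤ n. For every λ ∈ Γ_k and every index i ∈ {1,…,n}, the partial derivative with respect to the i-th coordinate of the function μ ↦ σ_k(μ)/σ_l(μ) is strictly positive at λ. (The function is well defined and smooth on the open set Γ_k, since σ_l > 0 on Γ_k.) -/
theorem Nat.choose_mul_choose_add_two_lt_sq {n j : ℕ} (h : j + 2 ≤ n) :
    n.choose j * n.choose (j + 2) < n.choose (j + 1) ^ 2 := by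
  obtain ⟨d, rfl⟩ : ∃ d, n = j + 2 + d := ⟨n - (j + 2), by omega⟩
  have e1 := Nat.choose_succ_right_eq (j + 2 + d) j
  have e2 := Nat.choose_succ_right_eq (j + 2 + d) (j + 1)
  rw [show j + 2 + d - j = d + 2 by omega] at e1
  rw [show j + 2 + d - (j + 1) = d + 1 by omega] at e2
  have hpos : 0 < (j + 2 + d).choose (j + 1) := Nat.choose_pos (by omega)
  refine Nat.lt_of_mul_lt_mul_right (a := (j + 2) * (d + 2)) ?_
  calc (j + 2 + d).choose j * (j + 2 + d).choose (j + 2) * ((j + 2) * (d + 2))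
      = ((j + 2 + d).choose j * (d + 2)) * ((j + 2 + d).choose (j + 2) * (j + 2)) := by ring
    _ = (j + 2 + d).choose (j + 1) ^ 2 * ((j + 1) * (d + 1)) := by rw [← e1, e2]; ring
    _ < (j + 2 + d).choose (j + 1) ^ 2 * ((j + 2) * (d + 2)) := by
        gcongr <;> omega

theorem mul_lt_mul_succ_of_sq_lt {a : ℕ → ℝ} {k : ℕ} (hpos : ∀ r ≤ k + 1, 0 < a r)
    (hlc : ∀ r, r + 2 ≤ k + 1 → a r * a (r + 2) < a (r + 1) ^ 2) {j : ℕ} (hj : j < k) :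
    a (k + 1) * a j < a k * a (j + 1) := by
  induction k with
  | zero => omega
  | succ k ih =>
    rcases Nat.lt_succ_iff_lt_or_eq.mp hj with hj | rfl
    · have ih' := ih (fun r hr => hpos r (by omega)) (fun r hr => hlc r (by omega)) hj
      have hk := hpos k (by omega)
      have hk1 := hpos (k + 1) (by omega)
      have hj0 := hpos j (by omega)
      refine lt_of_mul_lt_mul_left ?_ hk.le
      calc a k * (a (k + 2) * a j) = (a k * a (k + 2)) * a j := by ring
        _ < a (k + 1) ^ 2 * a j := by gcongr; exact hlc k (by omega)
        _ = a (k + 1) * (a (k + 1) * a j) := by ring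
        _ < a (k + 1) * (a k * a (j + 1)) := by gcongr
        _ = a k * (a (k + 1) * a (j + 1)) := by ring
    · linarith [hlc j (by omega)]

namespace Multiset

section CommSemiring

variable {R : Type*} [CommSemiring R]

@[simp] theorem esymm_zero (s : Multiset R) : s.esymm 0 = 1 := by
  simp [esymm]

theorem esymm_one_s2 (s : Multiset R) : s.esymm 1 = s.sum := by
  simp [esymm, powersetCard_one]

theorem esymm_cons_succ_s2 (a : R) (s : Multiset R) (k : ℕ) :
    (a ::ₘ s).esymm (k + 1) = s.esymm (k + 1) + a * s.esymm k := by
  simp only [esymm, powersetCard_cons, map_add, sum_add, map_map, Function.comp_def, prod_cons,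
    sum_map_mul_left]

theorem esymm_eq_zero_of_card_lt {s : Multiset R} {k : ℕ} (h : card s < k) :
    s.esymm k = 0 := by
  simp [esymm, powersetCard_eq_empty _ h]

theorem esymm_card (s : Multiset R) : s.esymm (card s) = s.prod := by
  induction s using Multiset.induction with
  | empty => simp
  | cons a t ih =>
    rw [card_cons, esymm_cons_succ_s2, esymm_eq_zero_of_card_lt (Nat.lt_succ_self _), ih, prod_cons,
      zero_add]

theorem sq_sum_eq_sum_sq_add_two_mul_esymm_two (s : Multiset R) :
    s.sum ^ 2 = (s.map (· ^ 2)).sum + 2 * s.esymm 2 := by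
  induction s using Multiset.induction with
  | empty => simp [esymm_eq_zero_of_card_lt (s := (0 : Multiset R)) (k := 2) (by simp)]
  | cons a t ih =>
    rw [sum_cons, map_cons, sum_cons, esymm_cons_succ_s2, esymm_one_s2, add_sq, ih]
    ring

end CommSemiring

theorem esymm_map_inv_mul_prod {K : Type*} [Field K] {s : Multiset K} (hs : (0 : K) ∉ s)
    {r q : ℕ} (h : r + q = card s) : (s.map (·⁻¹)).esymm r * s.prod = s.esymm q := by
  induction s using Multiset.induction generalizing r q with
  | empty =>
    obtain ⟨rfl, rfl⟩ : r = 0 ∧ q = 0 := by simpa using h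
    simp
  | cons a t ih =>
    have ha : a ≠ 0 := fun h => hs (h ▸ mem_cons_self a t)
    have ht : (0 : K) ∉ t := fun h => hs (mem_cons_of_mem h)
    rw [card_cons] at h
    rw [map_cons, prod_cons]
    rcases r with _ | r
    · obtain rfl : q = card t + 1 := by omega
      rw [esymm_zero, one_mul, ← card_cons, esymm_card, prod_cons]
    rcases q with _ | q
    · have hr : r = card t := by omega
      subst hr
      rw [esymm_cons_succ_s2, esymm_eq_zero_of_card_lt (by simp), esymm_zero, ← card_map (·⁻¹) t,
        esymm_card, prod_map_inv']
      field_simp [prod_ne_zero ht]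
      ring
    · rw [esymm_cons_succ_s2, esymm_cons_succ_s2, ← ih ht (by omega : r + 1 + q = card t),
        ← ih ht (by omega : r + (q + 1) = card t)]
      field_simp
      ring

theorem sq_sum_le_card_mul_sum_sq (s : Multiset ℝ) :
    s.sum ^ 2 ≤ card s * (s.map (· ^ 2)).sum := by
  have hsum : s.sum = ∑ x ∈ s.toEnumFinset, x.1 := by
    rw [← Finset.sum_map_val, map_toEnumFinset_fst]
  have hsq : (s.map (· ^ 2)).sum = ∑ x ∈ s.toEnumFinset, x.1 ^ 2 := by
    conv_lhs => rw [← map_toEnumFinset_fst s, map_map]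
    rfl
  rw [hsum, hsq, ← card_toEnumFinset]
  exact _root_.sq_sum_le_card_mul_sum_sq

section esymmMean

variable {K : Type*} [Field K]

noncomputable def esymmMean (s : Multiset K) (r : ℕ) : K :=
  s.esymm r / (card s).choose r

@[simp] theorem esymmMean_zero (s : Multiset K) : s.esymmMean 0 = 1 := by
  simp [esymmMean]

theorem esymmMean_eq_zero_of_card_lt {s : Multiset K} {r : ℕ} (h : card s < r) :
    s.esymmMean r = 0 := by
  rw [esymmMean, esymm_eq_zero_of_card_lt h, zero_div]

theorem esymm_eq_esymmMean_mul_choose [CharZero K] {s : Multiset K} {r : ℕ} (h : r ≤ card s) :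
    s.esymm r = s.esymmMean r * (card s).choose r := by
  rw [esymmMean, div_mul_cancel₀ _ (Nat.cast_ne_zero.mpr (Nat.choose_pos h).ne')]

theorem esymmMean_map_inv_mul_prod {s : Multiset K} (hs : (0 : K) ∉ s) {r q : ℕ}
    (h : r + q = card s) : (s.map (·⁻¹)).esymmMean r * s.prod = s.esymmMean q := by
  rw [esymmMean, esymmMean, card_map, ← h, Nat.choose_symm_add, div_mul_eq_mul_div,
    esymm_map_inv_mul_prod hs h]

end esymmMean

open Polynomial in
theorem exists_card_add_one_eq_and_esymmMean_eq {s : Multiset ℝ} (hs : s ≠ 0) :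
    ∃ t : Multiset ℝ, card t + 1 = card s ∧ ∀ r ≤ card t, t.esymmMean r = s.esymmMean r := by
  obtain ⟨n, hn⟩ : ∃ n, card s = n + 1 :=
    Nat.exists_eq_succ_of_ne_zero (mt card_eq_zero.mp hs)
  set f : ℝ[X] := (s.map fun a => X - C a).prod
  have hf_roots : f.roots = s := roots_multiset_prod_X_sub_C s
  have hf_deg : f.natDegree = n + 1 := by rw [natDegree_multiset_prod_X_sub_C_eq_card, hn]
  have hf_monic : f.Monic := monic_multiset_prod_of_monic _ _ fun a _ => monic_X_sub_C a
  set g := derivative f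
  have hg_deg : g.natDegree = n := by rw [natDegree_derivative, hf_deg, Nat.add_sub_cancel]
  have hg_lead : g.leadingCoeff = n + 1 := by
    rw [leadingCoeff_derivative, hf_monic.leadingCoeff, hf_deg, one_mul, Nat.cast_succ]
  -- By Rolle, `f'` is real-rooted as well.
  have hg_roots : card g.roots = g.natDegree := by
    refine le_antisymm (card_roots' g) ?_
    have : card f.roots ≤ card g.roots + 1 := card_roots_le_derivative f
    rw [hf_roots, hn, ← hg_deg] at this
    omega
  refine ⟨g.roots, by rw [hg_roots, hg_deg, hn], fun r hr => ?_⟩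
  rw [hg_roots, hg_deg] at hr
  have hf_coeff : f.coeff (n + 1 - r) = (-1) ^ r * s.esymm r := by
    rw [coeff_eq_esymm_roots_of_card (by rw [hf_roots, hf_deg, hn]) (by omega),
      hf_monic.leadingCoeff, hf_deg, hf_roots, Nat.sub_sub_self (by omega), one_mul]
  have hg_coeff : g.coeff (n - r) = (n + 1) * (-1) ^ r * g.roots.esymm r := by
    rw [coeff_eq_esymm_roots_of_card hg_roots (by omega), hg_lead, hg_deg,
      Nat.sub_sub_self hr]
  have hderiv : g.coeff (n - r) = f.coeff (n + 1 - r) * (n + 1 - r) := by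
    rw [coeff_derivative, show n - r + 1 = n + 1 - r by omega, Nat.cast_sub hr]
    ring
  have hchoose : ((n.choose r * (n + 1) : ℕ) : ℝ) = ((n + 1).choose r * (n + 1 - r) : ℕ) :=
    congrArg _ (Nat.choose_mul_succ_eq n r)
  push_cast [Nat.cast_sub (by omega : r ≤ n + 1)] at hchoose
  have hsign : ((-1 : ℝ) ^ r) ≠ 0 := pow_ne_zero _ (by norm_num)
  have hnr : (n + 1 - r : ℝ) ≠ 0 := by
    have : (r : ℝ) ≤ n := by exact_mod_cast hr
    linarith
  rw [esymmMean, esymmMean, hg_roots, hg_deg, hn]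
  rw [hg_coeff, hf_coeff] at hderiv
  rw [div_eq_div_iff (Nat.cast_ne_zero.mpr (Nat.choose_pos hr).ne')
    (Nat.cast_ne_zero.mpr (Nat.choose_pos (by omega)).ne')]
  refine mul_left_cancel₀ (mul_ne_zero (mul_ne_zero (Nat.cast_add_one_ne_zero n) hsign) hnr) ?_
  linear_combination ((n + 1 - r) * ((n + 1).choose r : ℝ)) * hderiv -
    ((-1) ^ r * (n + 1 - r) * s.esymm r) * hchoose

theorem esymmMean_two_le_sq_esymmMean_one (s : Multiset ℝ) :
    s.esymmMean 2 ≤ s.esymmMean 1 ^ 2 := by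
  rcases lt_or_ge (card s) 2 with hs | hs
  · rw [esymmMean_eq_zero_of_card_lt hs]
    positivity
  have hm : (2 : ℝ) ≤ card s := by exact_mod_cast hs
  have hcs := sq_sum_le_card_mul_sum_sq s
  have hid := sq_sum_eq_sum_sq_add_two_mul_esymm_two s
  rw [esymmMean, esymmMean, Nat.cast_choose_two, Nat.choose_one_right, esymm_one_s2, div_pow,
    div_le_div_iff₀ (by nlinarith) (by positivity)]
  nlinarith [mul_le_mul_of_nonneg_left hcs (by positivity : (0 : ℝ) ≤ card s)]

theorem esymmMean_mul_esymmMean_le_sq_of_card_eq {s : Multiset ℝ} {j : ℕ}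
    (h : card s = j + 2) :
    s.esymmMean j * s.esymmMean (j + 2) ≤ s.esymmMean (j + 1) ^ 2 := by
  by_cases h0 : (0 : ℝ) ∈ s
  · have : s.esymmMean (j + 2) = 0 := by
      rw [esymmMean, ← h, esymm_card, prod_eq_zero h0, zero_div]
    rw [this, mul_zero]
    positivity
  -- Inverting the entries reverses the sequence of means, reducing to the case `j = 0`.
  have e0 := esymmMean_map_inv_mul_prod h0 (r := 0) (q := j + 2) (by omega)
  have e1 := esymmMean_map_inv_mul_prod h0 (r := 1) (q := j + 1) (by omega)
  have e2 := esymmMean_map_inv_mul_prod h0 (r := 2) (q := j) (by omega)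
  rw [← e0, ← e1, ← e2, esymmMean_zero]
  nlinarith [mul_le_mul_of_nonneg_right (esymmMean_two_le_sq_esymmMean_one (s.map (·⁻¹)))
    (sq_nonneg s.prod)]

theorem esymmMean_mul_esymmMean_le_sq (s : Multiset ℝ) (j : ℕ) :
    s.esymmMean j * s.esymmMean (j + 2) ≤ s.esymmMean (j + 1) ^ 2 := by
  obtain ⟨m, hm⟩ : ∃ m, card s = m := ⟨_, rfl⟩
  induction m generalizing s with
  | zero =>
    rw [esymmMean_eq_zero_of_card_lt (r := j + 2) (by omega), mul_zero]
    positivity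
  | succ m ih =>
    rcases lt_trichotomy (j + 2) (m + 1) with hlt | heq | hgt
    · obtain ⟨t, ht, hts⟩ := exists_card_add_one_eq_and_esymmMean_eq (s := s)
        (by rintro rfl; simp at hm)
      rw [← hts j (by omega), ← hts (j + 1) (by omega), ← hts (j + 2) (by omega)]
      exact ih t (by omega)
    · exact esymmMean_mul_esymmMean_le_sq_of_card_eq (hm.trans heq.symm)
    · rw [esymmMean_eq_zero_of_card_lt (r := j + 2) (by omega), mul_zero]
      positivity

theorem esymm_mul_esymm_lt_sq {s : Multiset ℝ} {j : ℕ}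
    (h : 0 < s.esymm j * s.esymm (j + 2)) : s.esymm j * s.esymm (j + 2) < s.esymm (j + 1) ^ 2 := by
  have hj : j + 2 ≤ card s := by
    by_contra! hlt
    rw [esymm_eq_zero_of_card_lt hlt, mul_zero] at h
    exact lt_irrefl 0 h
  have hC :
      ((card s).choose j * (card s).choose (j + 2) : ℝ) < (card s).choose (j + 1) ^ 2 := by
    exact_mod_cast Nat.choose_mul_choose_add_two_lt_sq hj
  have hCpos : (0 : ℝ) < (card s).choose j * (card s).choose (j + 2) := by
    have := Nat.choose_pos (by omega : j ≤ card s)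
    have := Nat.choose_pos hj
    positivity
  rw [esymm_eq_esymmMean_mul_choose (r := j) (by omega),
    esymm_eq_esymmMean_mul_choose (r := j + 1) (by omega), esymm_eq_esymmMean_mul_choose hj] at *
  have hE : 0 < s.esymmMean j * s.esymmMean (j + 2) := by
    refine pos_of_mul_pos_left ?_ hCpos.le
    linarith
  have hN := esymmMean_mul_esymmMean_le_sq s j
  calc _ = s.esymmMean j * s.esymmMean (j + 2) *
        ((card s).choose j * (card s).choose (j + 2) : ℝ) := by ring
    _ ≤ s.esymmMean (j + 1) ^ 2 * ((card s).choose j * (card s).choose (j + 2) : ℝ) := by gcongr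
    _ < s.esymmMean (j + 1) ^ 2 * (card s).choose (j + 1) ^ 2 := by gcongr; linarith
    _ = _ := by ring

theorem esymm_mul_esymm_le_sq (s : Multiset ℝ) (j : ℕ) :
    s.esymm j * s.esymm (j + 2) ≤ s.esymm (j + 1) ^ 2 := by
  rcases le_or_gt (s.esymm j * s.esymm (j + 2)) 0 with h | h
  · exact h.trans (sq_nonneg _)
  · exact (esymm_mul_esymm_lt_sq h).le

theorem esymm_pos_of_forall_esymm_cons_pos {a : ℝ} {s : Multiset ℝ} {k : ℕ}
    (h : ∀ j, 1 ≤ j → j ≤ k → 0 < (a ::ₘ s).esymm j) {r : ℕ} (hr : r < k) : 0 < s.esymm r := by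
  induction r with
  | zero => simp
  | succ r ih =>
    have hs := ih (by omega)
    have h1 := h (r + 1) (by omega) (by omega)
    have h2 := h (r + 2) (by omega) (by omega)
    rw [esymm_cons_succ_s2] at h1 h2
    by_contra! hneg
    nlinarith [esymm_mul_esymm_le_sq s r, mul_pos hs h2, mul_nonneg (neg_nonneg.mpr hneg) h1.le]

theorem esymm_succ_mul_esymm_lt {s : Multiset ℝ} {k j : ℕ} (hpos : ∀ r ≤ k, 0 < s.esymm r)
    (hj : j < k) : s.esymm (k + 1) * s.esymm j < s.esymm k * s.esymm (j + 1) := by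
  rcases le_or_gt (s.esymm (k + 1)) 0 with hk | hk
  · nlinarith [mul_pos (hpos k le_rfl) (hpos (j + 1) hj), hpos j hj.le]
  have hpos' : ∀ r ≤ k + 1, 0 < s.esymm r := fun r hr =>
    (Nat.lt_or_eq_of_le hr).elim (fun hr => hpos r (by omega)) (· ▸ hk)
  exact mul_lt_mul_succ_of_sq_lt hpos'
    (fun r hr => esymm_mul_esymm_lt_sq (mul_pos (hpos' r (by omega)) (hpos' (r + 2) hr))) hj

end Multiset

theorem fderiv_apply_single_eq_deriv_update {𝕜 ι F : Type*} [NontriviallyNormedField 𝕜]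
    [Fintype ι] [DecidableEq ι] [NormedAddCommGroup F] [NormedSpace 𝕜 F] {f : (ι → 𝕜) → F}
    {x : ι → 𝕜} (hf : DifferentiableAt 𝕜 f x) (i : ι) :
    fderiv 𝕜 f x (Pi.single i 1) = deriv (fun t => f (Function.update x i t)) (x i) := by
  have hf' : HasFDerivAt f (fderiv 𝕜 f x) (Function.update x i (x i)) := by
    rw [Function.update_eq_self]
    exact hf.hasFDerivAt
  exact (hf'.comp_hasDerivAt (x i) (hasDerivAt_update x i (x i))).deriv.symm

theorem differentiable_esymm (n k : ℕ) : Differentiable ℝ (esymm n k) := by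
  unfold esymm
  fun_prop

@[simp] theorem esymm_zero_left (n : ℕ) : esymm n 0 = 1 := by
  ext lam
  simp [esymm]

theorem esymm_eq_esymm_cons_erase {n : ℕ} (lam : Fin n → ℝ) (i : Fin n) (k : ℕ) :
    esymm n k lam = (lam i ::ₘ (Finset.univ.erase i).val.map lam).esymm k := by
  rw [esymm, ← Finset.esymm_map_val, ← Multiset.map_cons, Finset.erase_val,
    Multiset.cons_erase (Finset.mem_univ_val i)]

theorem esymm_update {n : ℕ} (lam : Fin n → ℝ) (i : Fin n) (x : ℝ) (k : ℕ) :
    esymm n k (Function.update lam i x) = (x ::ₘ (Finset.univ.erase i).val.map lam).esymm k := by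
  rw [esymm_eq_esymm_cons_erase _ i, Function.update_self]
  congr 2
  refine Multiset.map_congr rfl fun j hj => Function.update_of_ne ?_ x lam
  exact Finset.ne_of_mem_erase (Finset.mem_val.mp hj)

theorem hasDerivAt_esymm_update {n : ℕ} (lam : Fin n → ℝ) (i : Fin n) (k : ℕ) (x : ℝ) :
    HasDerivAt (fun t => esymm n (k + 1) (Function.update lam i t))
      (((Finset.univ.erase i).val.map lam).esymm k) x := by
  set M := (Finset.univ.erase i).val.map lam
  simp_rw [esymm_update, Multiset.esymm_cons_succ_s2]
  exact (((hasDerivAt_id x).mul_const (M.esymm k)).const_add (M.esymm (k + 1))).congr_deriv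
    (one_mul _)

theorem quotient_operator_strictly_elliptic_general (n k l : ℕ) (hlk : l < k)
    (lam : Fin n → ℝ) (hlam : lam ∈ GammaCone n k) (i : Fin n) :
    0 < fderiv ℝ (fun mu : Fin n → ℝ => esymm n k mu / esymm n l mu) lam
          (Pi.single i 1) := by
  obtain ⟨k, rfl⟩ : ∃ k', k = k' + 1 := ⟨k - 1, by omega⟩
  set M := (Finset.univ.erase i).val.map lam
  have hM : ∀ r ≤ k, 0 < M.esymm r := fun r hr =>
    Multiset.esymm_pos_of_forall_esymm_cons_pos (a := lam i) (k := k + 1)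
      (fun j h1 h2 => esymm_eq_esymm_cons_erase lam i j ▸ hlam j h1 h2) (by omega)
  rcases l with _ | l
  · simp only [esymm_zero_left, Pi.one_apply, div_one]
    rw [fderiv_apply_single_eq_deriv_update (differentiable_esymm n _).differentiableAt,
      (hasDerivAt_esymm_update lam i k (lam i)).deriv]
    exact hM k le_rfl
  have hl : 0 < esymm n (l + 1) lam := hlam (l + 1) (by omega) (by omega)
  have hdiff : DifferentiableAt ℝ (fun mu => esymm n (k + 1) mu / esymm n (l + 1) mu) lam :=
    ((differentiable_esymm n _).differentiableAt.mul
      ((differentiable_esymm n _).differentiableAt.inv hl.ne'))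
  rw [fderiv_apply_single_eq_deriv_update hdiff,
    ((hasDerivAt_esymm_update lam i k (lam i)).fun_div (hasDerivAt_esymm_update lam i l (lam i))
      (by rw [Function.update_eq_self]; exact hl.ne')).deriv]
  simp only [Function.update_eq_self]
  refine div_pos ?_ (pow_pos hl 2)
  rw [esymm_eq_esymm_cons_erase lam i (k + 1), esymm_eq_esymm_cons_erase lam i (l + 1),
    Multiset.esymm_cons_succ_s2, Multiset.esymm_cons_succ_s2]
  linarith [Multiset.esymm_succ_mul_esymm_lt hM (by omega : l < k)]

/-- Proposition 2.4, first part: for `0 ≤ l < k ≤ n` and `λ ∈ Γ_k`, each partial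
derivative of `μ ↦ σ_k(μ)/σ_l(μ)` is strictly positive at `λ`. -/
theorem quotient_operator_strictly_elliptic (n k l : ℕ) (hn : 2 ≤ n) (hlk : l < k)
    (hkn : k ≤ n) (lam : Fin n → ℝ) (hlam : lam ∈ GammaCone n k) (i : Fin n) :
    0 < fderiv ℝ (fun mu : Fin n → ℝ => esymm n k mu / esymm n l mu) lam
          (Pi.single i 1) :=
  quotient_operator_strictly_elliptic_general n k l hlk lam hlam i
end

section
/- (Lemma 2.11, concavity part.) Let n ≥ 2, 2 ≤ k ≤ n, and let β_0,…,β_{k-2} be nonnegative real numbers. Then the function f(λ) = σ_k(λ)/σ_{k-1}(λ) − Σ_{l=0}^{k-2} β_l · σ_l(λ)/σ_{k-1}(λ) is concave on the convex cone Γ_{k-1}. -/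
/-- The Krylov-type operator
`f(λ) = σ_k(λ)/σ_{k-1}(λ) − ∑_{l=0}^{k-2} β_l σ_l(λ)/σ_{k-1}(λ)`. -/
noncomputable def krylovF (n k : ℕ) (β : ℕ → ℝ) (lam : Fin n → ℝ) : ℝ :=
  esymm n k lam / esymm n (k - 1) lam
    - ∑ l ∈ Finset.range (k - 1), β l * (esymm n l lam / esymm n (k - 1) lam)

open Finset

section Convexity
variable {E : Type*} [AddCommGroup E] [Module ℝ E] {s : Set E}

theorem convexOn_sum {κ : Type*} (t : Finset κ) {F : κ → E → ℝ} (hs : Convex ℝ s)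
    (h : ∀ k ∈ t, ConvexOn ℝ s (F k)) : ConvexOn ℝ s fun x => ∑ k ∈ t, F k x := by
  classical
  induction t using Finset.induction with
  | empty => simpa using convexOn_const 0 hs
  | insert a t ha ih =>
    simp only [sum_insert ha]
    exact (h a (mem_insert_self a t)).add (ih fun k hk => h k (mem_insert_of_mem hk))

theorem ConvexOn.exp {v : E → ℝ} (hv : ConvexOn ℝ s v) : ConvexOn ℝ s fun x => Real.exp (v x) :=
  ⟨hv.1, fun _ hx _ hy _ _ ha hb hab =>
    (Real.exp_le_exp.2 (hv.2 hx hy ha hb hab)).trans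
      (convexOn_exp.2 (Set.mem_univ _) (Set.mem_univ _) ha hb hab)⟩

theorem ConcaveOn.convexOn_neg_log {u : E → ℝ} (hu : ConcaveOn ℝ s u) (hpos : ∀ x ∈ s, 0 < u x) :
    ConvexOn ℝ s fun x => -Real.log (u x) := by
  refine ⟨hu.1, fun x hx y hy a b ha hb hab => ?_⟩
  have hcomb : 0 < a • u x + b • u y := convex_Ioi (0 : ℝ) (hpos x hx) (hpos y hy) ha hb hab
  have hmono := Real.log_le_log hcomb (hu.2 hx hy ha hb hab)
  have hlog := strictConcaveOn_log_Ioi.concaveOn.2 (hpos x hx) (hpos y hy) ha hb hab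
  simp only [smul_eq_mul] at *
  linarith

theorem ConcaveOn.convexOn_sq_div {b : E → ℝ} (hb : ConcaveOn ℝ s b) (hpos : ∀ x ∈ s, 0 < b x)
    (u : E →ₗ[ℝ] ℝ) : ConvexOn ℝ s fun x => u x ^ 2 / b x := by
  refine ⟨hb.1, fun x hx y hy a c ha hc hac => ?_⟩
  have hbx := hpos x hx
  have hby := hpos y hy
  have hcomb : 0 < a • b x + c • b y := convex_Ioi (0 : ℝ) hbx hby ha hc hac
  have hmono := hb.2 hx hy ha hc hac
  simp only [map_add, map_smul, smul_eq_mul] at *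
  calc (a * u x + c * u y) ^ 2 / b (a • x + c • y)
      ≤ (a * u x + c * u y) ^ 2 / (a * b x + c * b y) :=
        div_le_div_of_nonneg_left (sq_nonneg _) hcomb hmono
    _ ≤ a * (u x ^ 2 / b x) + c * (u y ^ 2 / b y) := by
        rw [div_le_iff₀ hcomb, ← sub_nonneg]
        have hgap : (a * (u x ^ 2 / b x) + c * (u y ^ 2 / b y)) * (a * b x + c * b y)
            - (a * u x + c * u y) ^ 2 = a * c * (u x * b y - u y * b x) ^ 2 / (b x * b y) := by
          field_simp
          ring
        rw [hgap]
        positivity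

end Convexity

theorem IsOpen.exists_pos_apply_mem {X : Type*} [TopologicalSpace X] {S : Set X} (hS : IsOpen S)
    {γ : ℝ → X} (hγ : Continuous γ) (h0 : γ 0 ∈ S) : ∃ δ > 0, γ δ ∈ S :=
  ((((hγ.tendsto 0).eventually (hS.mem_nhds h0)).filter_mono nhdsWithin_le_nhds).and
    (self_mem_nhdsWithin (s := Set.Ioi 0))).exists.imp fun _ h => ⟨h.2, h.1⟩

theorem nonneg_of_forall_pos_add_mul {a b : ℝ} (h : ∀ t > 0, 0 < a + t * b) : 0 ≤ b := by
  by_contra! hb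
  have := h ((|a| + 1) / -b) (div_pos (by positivity) (neg_pos.2 hb))
  rw [div_mul_eq_mul_div, div_neg, mul_div_cancel_right₀ _ hb.ne] at this
  linarith [le_abs_self a]

section ElementarySymmetric
variable {ι : Type*} {A : Finset ι} {k m : ℕ} {f : ι → ℝ}

-- `σ_j` of the coordinates of `f` indexed by `A`; the ambient space `ι → ℝ` stays fixed when the
-- induction removes a coordinate from `A`.
noncomputable def esymmOn (A : Finset ι) (j : ℕ) (f : ι → ℝ) : ℝ :=
  ∑ s ∈ A.powersetCard j, ∏ i ∈ s, f i

def gardingCone (A : Finset ι) (k : ℕ) : Set (ι → ℝ) :=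
  {f | ∀ j, 1 ≤ j → j ≤ k → 0 < esymmOn A j f}

@[simp]
theorem esymmOn_zero (A : Finset ι) (f : ι → ℝ) : esymmOn A 0 f = 1 := by
  simp [esymmOn]

theorem esymmOn_one (A : Finset ι) (f : ι → ℝ) : esymmOn A 1 f = ∑ i ∈ A, f i := by
  simp [esymmOn, powersetCard_one, sum_map]

theorem esymmOn_congr {g : ι → ℝ} (h : ∀ i ∈ A, f i = g i) (j : ℕ) :
    esymmOn A j f = esymmOn A j g :=
  sum_congr rfl fun _ hs => prod_congr rfl fun i hi => h i ((mem_powersetCard.1 hs).1 hi)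

theorem esymmOn_pos (hf : ∀ i ∈ A, 0 < f i) {j : ℕ} (hj : j ≤ #A) : 0 < esymmOn A j f :=
  sum_pos (fun _ hs => prod_pos fun i hi => hf i ((mem_powersetCard.1 hs).1 hi))
    (powersetCard_nonempty.2 hj)

theorem esymmOn_smul (A : Finset ι) (j : ℕ) (c : ℝ) (f : ι → ℝ) :
    esymmOn A j (c • f) = c ^ j * esymmOn A j f := by
  simp only [esymmOn, mul_sum, Pi.smul_apply, smul_eq_mul]
  refine sum_congr rfl fun s hs => ?_
  rw [prod_mul_distrib, prod_const, (mem_powersetCard.1 hs).2]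

theorem continuous_esymmOn (A : Finset ι) (j : ℕ) : Continuous (esymmOn A j) := by
  unfold esymmOn
  fun_prop

theorem gardingCone_zero (A : Finset ι) : gardingCone A 0 = Set.univ :=
  Set.eq_univ_of_forall fun _ _ h1 h2 => absurd (h1.trans h2) (by norm_num)

theorem gardingCone_anti (A : Finset ι) : Antitone (gardingCone A) :=
  fun _ _ h _ hf j h1 h2 => hf j h1 (h2.trans h)

theorem esymmOn_pos_of_mem_gardingCone (hf : f ∈ gardingCone A k) {j : ℕ} (hj : j ≤ k) :
    0 < esymmOn A j f := by
  rcases j.eq_zero_or_pos with rfl | h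
  · simp
  · exact hf j h hj

theorem mem_gardingCone_succ_iff :
    f ∈ gardingCone A (k + 1) ↔ f ∈ gardingCone A k ∧ 0 < esymmOn A (k + 1) f := by
  refine ⟨fun hf => ⟨gardingCone_anti A k.le_succ hf, hf _ k.succ_pos le_rfl⟩,
    fun ⟨hf, hk⟩ j h1 h2 => ?_⟩
  rcases h2.lt_or_eq with h | rfl
  · exact hf j h1 (Nat.lt_succ_iff.1 h)
  · exact hk

theorem mem_gardingCone_of_pos (hf : ∀ i ∈ A, 0 < f i) (hk : k ≤ #A) : f ∈ gardingCone A k :=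
  fun _ _ hj => esymmOn_pos hf (hj.trans hk)

theorem smul_mem_gardingCone (hf : f ∈ gardingCone A k) {c : ℝ} (hc : 0 < c) :
    c • f ∈ gardingCone A k := fun j h1 h2 => by
  rw [esymmOn_smul]
  exact mul_pos (pow_pos hc j) (hf j h1 h2)

theorem isOpen_gardingCone (A : Finset ι) (k : ℕ) : IsOpen (gardingCone A k) := by
  have : gardingCone A k = ⋂ j ∈ Finset.Icc 1 k, esymmOn A j ⁻¹' Set.Ioi 0 := by
    ext f; simp [gardingCone]
  rw [this]
  exact isOpen_biInter_finset fun j _ => isOpen_Ioi.preimage (continuous_esymmOn A j)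

theorem gardingCone_succ_eq (A : Finset ι) (m : ℕ) : gardingCone A (m + 1)
    = {f ∈ gardingCone A m | 0 < esymmOn A (m + 1) f / esymmOn A m f} := by
  ext f
  rw [mem_gardingCone_succ_iff]
  exact and_congr_right fun hf => (div_pos_iff_of_pos_right
    (esymmOn_pos_of_mem_gardingCone hf le_rfl)).symm

theorem add_mem_gardingCone_of_pos (hconv : Convex ℝ (gardingCone A k))
    (hf : f ∈ gardingCone A k) {g : ι → ℝ} (hg : ∀ i ∈ A, 0 < g i) (hk : k ≤ #A) :
    f + g ∈ gardingCone A k := by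
  have hmid := hconv hf (mem_gardingCone_of_pos hg hk) (by norm_num : (0 : ℝ) ≤ 1 / 2)
    (by norm_num : (0 : ℝ) ≤ 1 / 2) (by norm_num)
  convert smul_mem_gardingCone hmid (by norm_num : (0 : ℝ) < 2) using 1
  ext i
  simp only [Pi.add_apply, Pi.smul_apply, smul_eq_mul]
  ring

section Erase
variable [DecidableEq ι] {i : ι}

theorem esymmOn_succ_of_mem (hi : i ∈ A) (j : ℕ) (f : ι → ℝ) :
    esymmOn A (j + 1) f = esymmOn (A.erase i) (j + 1) f + f i * esymmOn (A.erase i) j f := by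
  simp only [esymmOn, ← Finset.esymm_map_val, Multiset.esymm]
  rw [← Multiset.cons_erase (show i ∈ A.val from hi), ← erase_val, Multiset.map_cons,
    Multiset.powersetCard_cons]
  simp [Multiset.map_map, Multiset.sum_map_mul_left]

theorem esymmOn_update_succ (hi : i ∈ A) (j : ℕ) (f : ι → ℝ) (x : ℝ) :
    esymmOn A (j + 1) (Function.update f i x)
      = esymmOn (A.erase i) (j + 1) f + x * esymmOn (A.erase i) j f := by
  have hoff : ∀ l ∈ A.erase i, Function.update f i x l = f l := fun l hl =>
    Function.update_of_ne (ne_of_mem_erase hl) x f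
  rw [esymmOn_succ_of_mem hi, esymmOn_congr hoff, esymmOn_congr hoff, Function.update_self]

-- Both sides sum `∏ l ∈ t, f l` over the pairs `(i, t)` with `i ∈ t ⊆ A` and `#t = j + 1`.
theorem sum_mul_esymmOn_erase (A : Finset ι) (j : ℕ) (f : ι → ℝ) :
    ∑ i ∈ A, f i * esymmOn (A.erase i) j f = (j + 1) * esymmOn A (j + 1) f := by
  have lhs : ∑ i ∈ A, f i * esymmOn (A.erase i) j f
      = ∑ p ∈ A.sigma fun i => (A.erase i).powersetCard j, ∏ l ∈ insert p.1 p.2, f l := by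
    rw [sum_sigma]
    refine sum_congr rfl fun i _ => ?_
    rw [esymmOn, mul_sum]
    refine sum_congr rfl fun s hs => ?_
    rw [prod_insert fun h => notMem_erase i A ((mem_powersetCard.1 hs).1 h)]
  have rhs : (j + 1 : ℝ) * esymmOn A (j + 1) f
      = ∑ p ∈ (A.powersetCard (j + 1)).sigma fun t => t, ∏ l ∈ p.1, f l := by
    rw [sum_sigma, esymmOn, mul_sum]
    refine sum_congr rfl fun t ht => ?_
    simp [(mem_powersetCard.1 ht).2, mul_comm]
  rw [lhs, rhs]
  refine sum_nbij' (fun p => ⟨insert p.1 p.2, p.1⟩) (fun q => ⟨q.2, q.1.erase q.2⟩)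
    ?_ ?_ ?_ ?_ (fun _ _ => rfl)
  · simp only [mem_sigma, mem_powersetCard]
    grind
  · simp only [mem_sigma, mem_powersetCard]
    grind
  · rintro ⟨i, s⟩ h
    simp only [mem_sigma, mem_powersetCard] at h
    simp [erase_insert fun hi => notMem_erase i A (h.2.1 hi)]
  · rintro ⟨t, i⟩ h
    simp [insert_erase (mem_sigma.1 h).2]

theorem sum_esymmOn_erase (B : Finset ι) (r : ℕ) (f : ι → ℝ) :
    ∑ j ∈ B, esymmOn (B.erase j) r f = (#B - r : ℝ) * esymmOn B r f := by
  cases r with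
  | zero => simp
  | succ r =>
    calc ∑ j ∈ B, esymmOn (B.erase j) (r + 1) f
        = ∑ j ∈ B, (esymmOn B (r + 1) f - f j * esymmOn (B.erase j) r f) :=
          sum_congr rfl fun j hj => by rw [esymmOn_succ_of_mem hj]; ring
      _ = (#B - (r + 1 : ℕ) : ℝ) * esymmOn B (r + 1) f := by
          rw [sum_sub_distrib, sum_mul_esymmOn_erase, sum_const, nsmul_eq_mul]
          push_cast; ring

theorem esymmOn_succ_succ_mul (A : Finset ι) (m : ℕ) (f : ι → ℝ) :
    (m + 2) * esymmOn A (m + 2) f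
      = (∑ i ∈ A, f i) * esymmOn A (m + 1) f - ∑ i ∈ A, f i ^ 2 * esymmOn (A.erase i) m f := by
  have h := sum_mul_esymmOn_erase A (m + 1) f
  push_cast at h
  rw [add_assoc, one_add_one_eq_two] at h
  rw [← h, sum_mul, ← sum_sub_distrib]
  refine sum_congr rfl fun i hi => ?_
  rw [esymmOn_succ_of_mem hi]
  ring

theorem esymmOn_erase_nonneg (hconv : Convex ℝ (gardingCone A (m + 1))) (hA : m + 1 ≤ #A)
    (hi : i ∈ A) (hf : f ∈ gardingCone A (m + 1)) : 0 ≤ esymmOn (A.erase i) m f := by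
  obtain ⟨δ, hδ, hshift⟩ := (isOpen_gardingCone A (m + 1)).exists_pos_apply_mem
    (γ := fun s => f - s • 1) (by fun_prop) (by simpa using hf)
  refine nonneg_of_forall_pos_add_mul
    (a := esymmOn (A.erase i) (m + 1) f + f i * esymmOn (A.erase i) m f) fun t ht => ?_
  have hsplit : Function.update f i (f i + t)
      = (f - δ • 1) + Function.update (fun _ => δ) i (δ + t) := by
    ext l
    rcases eq_or_ne l i with rfl | hl
    · simp
      ring
    · simp [hl]
  have hpos := add_mem_gardingCone_of_pos hconv hshift
    (g := Function.update (fun _ => δ) i (δ + t))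
    (fun l _ => by rw [Function.update_apply]; split_ifs <;> positivity) hA
  rw [← hsplit] at hpos
  have := hpos (m + 1) m.succ_pos le_rfl
  rw [esymmOn_update_succ hi] at this
  linarith

theorem esymmOn_erase_pos {r : ℕ} (hconv : Convex ℝ (gardingCone A (r + 2))) (hA : r + 2 ≤ #A)
    (hi : i ∈ A) (hf : f ∈ gardingCone A (r + 2)) (hr : 0 < esymmOn (A.erase i) r f) :
    0 < esymmOn (A.erase i) (r + 1) f := by
  refine (esymmOn_erase_nonneg hconv hA hi hf).lt_of_ne' fun hzero => ?_
  have hsum : 0 < ∑ j ∈ A.erase i, esymmOn ((A.erase i).erase j) r f := by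
    rw [sum_esymmOn_erase, card_erase_of_mem hi]
    refine mul_pos ?_ hr
    have hA' : (r + 2 : ℝ) ≤ #A := by exact_mod_cast hA
    rw [Nat.cast_sub (by omega)]
    push_cast
    linarith
  obtain ⟨j, hj, hcj⟩ : ∃ j ∈ A.erase i, 0 < esymmOn ((A.erase i).erase j) r f := by
    by_contra! h
    exact hsum.not_ge (sum_nonpos h)
  -- `σ_{r+1}(A \ i)` is affine in `f j` with slope `σ_r(A \ {i, j}) > 0`, so lowering `f j` a
  -- little stays in the cone but makes it negative.
  obtain ⟨δ, hδ, hshift⟩ := (isOpen_gardingCone A (r + 2)).exists_pos_apply_mem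
    (γ := fun s => Function.update f j (f j - s)) (by fun_prop) (by simpa using hf)
  have hnonneg := esymmOn_erase_nonneg hconv hA hi hshift
  rw [esymmOn_update_succ hj] at hnonneg
  rw [esymmOn_succ_of_mem hj] at hzero
  nlinarith

theorem concaveOn_esymmOn_succ_succ_div (hconv : Convex ℝ (gardingCone A (m + 1)))
    (herase : ∀ i ∈ A, ∀ f ∈ gardingCone A (m + 1), f ∈ gardingCone (A.erase i) m)
    (hq : ∀ i ∈ A, ConcaveOn ℝ (gardingCone (A.erase i) m)
      fun f => esymmOn (A.erase i) (m + 1) f / esymmOn (A.erase i) m f) :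
    ConcaveOn ℝ (gardingCone A (m + 1)) fun f => esymmOn A (m + 2) f / esymmOn A (m + 1) f := by
  set G : ι → (ι → ℝ) → ℝ := fun i f =>
    f i + esymmOn (A.erase i) (m + 1) f / esymmOn (A.erase i) m f
  have hG_eq : ∀ i ∈ A, ∀ f ∈ gardingCone A (m + 1),
      G i f = esymmOn A (m + 1) f / esymmOn (A.erase i) m f := fun i hi f hf => by
    have := (esymmOn_pos_of_mem_gardingCone (herase i hi f hf) le_rfl).ne'
    simp only [G]
    rw [esymmOn_succ_of_mem hi]
    field_simp
    ring
  have hG : ∀ i ∈ A, ConcaveOn ℝ (gardingCone A (m + 1)) (G i) := fun i hi =>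
    ((LinearMap.proj i).concaveOn hconv).add ((hq i hi).subset (herase i hi) hconv)
  have hGpos : ∀ i ∈ A, ∀ f ∈ gardingCone A (m + 1), 0 < G i f := fun i hi f hf => by
    rw [hG_eq i hi f hf]
    exact div_pos (hf _ m.succ_pos le_rfl)
      (esymmOn_pos_of_mem_gardingCone (herase i hi f hf) le_rfl)
  have hsq : ConvexOn ℝ (gardingCone A (m + 1)) fun f => ∑ i ∈ A, f i ^ 2 / G i f :=
    convexOn_sum A hconv fun i hi => (hG i hi).convexOn_sq_div (hGpos i hi) (LinearMap.proj i)
  have hlin : ConcaveOn ℝ (gardingCone A (m + 1)) fun f => ∑ i ∈ A, f i :=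
    ((∑ i ∈ A, LinearMap.proj i).concaveOn hconv).congr fun f _ => by simp
  refine ((hlin.sub hsq).smul (by positivity : (0 : ℝ) ≤ 1 / (m + 2))).congr fun f hf => ?_
  have hpos := hf _ m.succ_pos le_rfl
  have hterm : ∀ i ∈ A,
      f i ^ 2 / G i f = f i ^ 2 * esymmOn (A.erase i) m f / esymmOn A (m + 1) f := fun i hi => by
    rw [hG_eq i hi f hf, div_div_eq_mul_div]
  have hid := esymmOn_succ_succ_mul A m f
  simp only [Pi.sub_apply, smul_eq_mul]
  rw [sum_congr rfl hterm, ← sum_div]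
  field_simp
  linarith

theorem convex_gardingCone_and_concaveOn_and_mem_erase (m : ℕ) : ∀ A : Finset ι, m + 1 ≤ #A →
    Convex ℝ (gardingCone A m)
      ∧ ConcaveOn ℝ (gardingCone A m) (fun f => esymmOn A (m + 1) f / esymmOn A m f)
      ∧ ∀ i ∈ A, ∀ f ∈ gardingCone A m, f ∈ gardingCone (A.erase i) (m - 1) := by
  induction m with
  | zero =>
    intro A _
    rw [gardingCone_zero]
    refine ⟨convex_univ, ?_, fun i _ f _ => by simp [gardingCone_zero]⟩
    exact ((∑ i ∈ A, LinearMap.proj i).concaveOn convex_univ).congr fun f _ => by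
      simp [esymmOn_one]
  | succ m ih =>
    intro A hA
    have hconv : Convex ℝ (gardingCone A (m + 1)) := by
      rw [gardingCone_succ_eq]
      exact (ih A (by omega)).2.1.convex_gt 0
    have herase : ∀ i ∈ A, ∀ f ∈ gardingCone A (m + 1), f ∈ gardingCone (A.erase i) m := by
      intro i hi f hf
      have hlow := (ih A (by omega)).2.2 i hi f (gardingCone_anti A m.le_succ hf)
      cases m with
      | zero => simp [gardingCone_zero]
      | succ r =>
        exact mem_gardingCone_succ_iff.2 ⟨hlow, esymmOn_erase_pos hconv (by omega) hi hf
          (esymmOn_pos_of_mem_gardingCone hlow le_rfl)⟩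
    refine ⟨hconv, concaveOn_esymmOn_succ_succ_div hconv herase fun i hi => ?_, herase⟩
    exact (ih (A.erase i) (by rw [card_erase_of_mem hi]; omega)).2.1

theorem convex_gardingCone (hA : m + 1 ≤ #A) : Convex ℝ (gardingCone A m) :=
  (convex_gardingCone_and_concaveOn_and_mem_erase m A hA).1

theorem concaveOn_esymmOn_succ_div (hA : m + 1 ≤ #A) :
    ConcaveOn ℝ (gardingCone A m) fun f => esymmOn A (m + 1) f / esymmOn A m f :=
  (convex_gardingCone_and_concaveOn_and_mem_erase m A hA).2.1

theorem convexOn_esymmOn_div (hA : m + 1 ≤ #A) {l : ℕ} (hl : l ≤ m) :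
    ConvexOn ℝ (gardingCone A m) fun f => esymmOn A l f / esymmOn A m f := by
  have hconv := convex_gardingCone hA
  have hV : ConvexOn ℝ (gardingCone A m)
      fun f => ∑ j ∈ Ico l m, -Real.log (esymmOn A (j + 1) f / esymmOn A j f) := by
    refine convexOn_sum _ hconv fun j hj => ?_
    have hjm := (mem_Ico.1 hj).2
    refine ((concaveOn_esymmOn_succ_div (m := j) (by omega)).subset
      (gardingCone_anti A hjm.le) hconv).convexOn_neg_log fun f hf => ?_
    exact div_pos (esymmOn_pos_of_mem_gardingCone hf hjm)
      (esymmOn_pos_of_mem_gardingCone hf hjm.le)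
  refine hV.exp.congr fun f hf => ?_
  have hpos : ∀ j ≤ m, 0 < esymmOn A j f := fun j hj => esymmOn_pos_of_mem_gardingCone hf hj
  have htel : ∑ j ∈ Ico l m, -Real.log (esymmOn A (j + 1) f / esymmOn A j f)
      = ∑ j ∈ Ico l m, (-Real.log (esymmOn A (j + 1) f) - -Real.log (esymmOn A j f)) :=
    sum_congr rfl fun j hj => by
      rw [Real.log_div (hpos _ (mem_Ico.1 hj).2).ne' (hpos _ (mem_Ico.1 hj).2.le).ne']
      ring
  dsimp only
  rw [htel, sum_Ico_sub (f := fun j => -Real.log (esymmOn A j f)) hl, sub_neg_eq_add,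
    neg_add_eq_sub, Real.exp_sub, Real.exp_log (hpos l hl), Real.exp_log (hpos m le_rfl)]

end Erase

end ElementarySymmetric

theorem krylovF_concave_general (n k : ℕ) (hk : 2 ≤ k) (hkn : k ≤ n)
    (β : ℕ → ℝ) (hβ : ∀ l ≤ k - 2, 0 ≤ β l) :
    ConcaveOn ℝ (GammaCone n (k - 1)) (krylovF n k β) := by
  obtain ⟨m, rfl⟩ : ∃ m, k = m + 1 := ⟨k - 1, by omega⟩
  have hA : m + 1 ≤ #(univ : Finset (Fin n)) := by simpa using hkn
  have hsum : ConvexOn ℝ (gardingCone univ m)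
      fun f => ∑ l ∈ range m, β l * (esymmOn univ l f / esymmOn univ m f) :=
    convexOn_sum _ (convex_gardingCone hA) fun l hl =>
      (convexOn_esymmOn_div hA (mem_range.1 hl).le).smul (hβ l (by grind))
  exact (concaveOn_esymmOn_succ_div hA).sub hsum

/-- Lemma 2.11, concavity part: if `β_0, …, β_{k-2} ≥ 0`, then
`f(λ) = σ_k/σ_{k-1} − ∑_{l=0}^{k-2} β_l σ_l/σ_{k-1}` is concave on `Γ_{k-1}`. -/
theorem krylovF_concave (n k : ℕ) (hn : 2 ≤ n) (hk : 2 ≤ k) (hkn : k ≤ n)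
    (β : ℕ → ℝ) (hβ : ∀ l ≤ k - 2, 0 ≤ β l) :
    ConcaveOn ℝ (GammaCone n (k - 1)) (krylovF n k β) :=
  krylovF_concave_general n k hk hkn β hβ
end
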